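/- arXiv:2309.02800 — 3 statements merged into one kernel-verified Lean document; each statement's English description precedes it below -/
import Mathlib

section
/- If ω ∈ ℂ is transcendental and τ > 0 is a transcendence type for ω, then τ ≥ 2. -/
/-- The height of an integer polynomial: the maximum absolute value of its
coefficients. -/
noncomputable def polyHeight (P : Polynomial ℤ) : ℕ :=
  P.support.sup fun k => (P.coeff k).natAbs

/-- `τ` is a transcendence type for `ω` if there exists `c > 0` such that for
every nonzero `P ∈ ℤ[X]` of degree at most `n` and height at most `h` one has
`log|P(ω)| ≥ −c(n + log h)^τ`. -/
def IsTranscendenceType (ω : ℂ) (τ : ℝ) : Prop :=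
  ∃ c > (0 : ℝ), ∀ (n : ℕ) (h : ℝ) (P : Polynomial ℤ), P ≠ 0 →
    P.natDegree ≤ n → (polyHeight P : ℝ) ≤ h →
    -(c * ((n : ℝ) + Real.log h) ^ τ) ≤ Real.log ‖Polynomial.aeval ω P‖

/-!
Dirichlet's box principle: the `H ^ (2m)` integer polynomials of degree `< 2m` with coefficients
in `[0, H)` take values in a disc of radius `≍ m H`, so two of them take values within
`≍ m H / H ^ m` of each other. Their difference `Q` is nonzero at the transcendental `ω`, has
degree `< 2m` and height `≤ H`; with `H = 2 ^ m`, `log |Q(ω)| ≤ -m² log 2 + O(m)` while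
`deg Q + log H = O(m)`, so a transcendence type `τ` gives `m² = O(m ^ τ + m)`, i.e. `τ ≥ 2`.
-/

open Polynomial Filter Topology

theorem abs_sub_le_one_of_min_floor_eq {N : ℕ} {s t : ℝ} (hs : s ∈ Set.Icc 0 (N : ℝ))
    (ht : t ∈ Set.Icc 0 (N : ℝ)) (h : min (N - 1) ⌊s⌋₊ = min (N - 1) ⌊t⌋₊) : |s - t| ≤ 1 := by
  have bounds : ∀ u ∈ Set.Icc 0 (N : ℝ),
      ((min (N - 1) ⌊u⌋₊ : ℕ) : ℝ) ≤ u ∧ u ≤ (min (N - 1) ⌊u⌋₊ : ℕ) + 1 := by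
    rintro u ⟨hu0, huN⟩
    refine ⟨(Nat.cast_le.2 (min_le_right _ _)).trans (Nat.floor_le hu0), ?_⟩
    rcases le_total ⌊u⌋₊ (N - 1) with hle | hle
    · rw [min_eq_right hle]; exact (Nat.lt_floor_add_one u).le
    · rw [min_eq_left hle]; exact huN.trans (by exact_mod_cast (by omega : N ≤ N - 1 + 1))
  obtain ⟨hs₁, hs₂⟩ := bounds s hs
  obtain ⟨ht₁, ht₂⟩ := bounds t ht
  rw [h] at hs₁ hs₂
  rw [abs_le]; constructor <;> linarith

theorem exists_map_fin_abs_sub_le_of_map_eq {N : ℕ} (hN : 0 < N) {R : ℝ} (hR : 0 < R) :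
    ∃ cell : ℝ → Fin N, ∀ x y, |x| ≤ R → |y| ≤ R → cell x = cell y → |x - y| ≤ 2 * R / N := by
  set δ := 2 * R / N
  have hδ : 0 < δ := by positivity
  refine ⟨fun x => ⟨min (N - 1) ⌊(x + R) / δ⌋₊, by omega⟩, fun x y hx hy hxy => ?_⟩
  have scaled_mem : ∀ z, |z| ≤ R → (z + R) / δ ∈ Set.Icc 0 (N : ℝ) := by
    intro z hz
    rw [abs_le] at hz
    refine ⟨by apply div_nonneg <;> linarith, ?_⟩
    rw [div_le_iff₀ hδ]
    simp only [δ]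
    field_simp
    linarith
  have h1 := abs_sub_le_one_of_min_floor_eq (scaled_mem x hx) (scaled_mem y hy) (Fin.mk.inj hxy)
  rwa [← sub_div, add_sub_add_right_eq_sub, abs_div, abs_of_pos hδ, div_le_one hδ] at h1

theorem Complex.exists_ne_norm_sub_le_of_card_lt {α : Type*} [Fintype α] (v : α → ℂ) {N : ℕ}
    (hN : 0 < N) (hcard : N ^ 2 < Fintype.card α) {R : ℝ} (hR : 0 < R) (hv : ∀ a, ‖v a‖ ≤ R) :
    ∃ a b, a ≠ b ∧ ‖v a - v b‖ ≤ 4 * R / N := by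
  obtain ⟨cell, hcell⟩ := exists_map_fin_abs_sub_le_of_map_eq hN hR
  have hcard' : Fintype.card (Fin N × Fin N) < Fintype.card α := by simpa [sq] using hcard
  obtain ⟨a, b, hab, heq⟩ :=
    Fintype.exists_ne_map_eq_of_card_lt (fun a => (cell (v a).re, cell (v a).im)) hcard'
  have hre := hcell _ _ ((Complex.abs_re_le_norm _).trans (hv a))
    ((Complex.abs_re_le_norm _).trans (hv b)) (Prod.ext_iff.1 heq).1
  have him := hcell _ _ ((Complex.abs_im_le_norm _).trans (hv a))
    ((Complex.abs_im_le_norm _).trans (hv b)) (Prod.ext_iff.1 heq).2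
  refine ⟨a, b, hab, (Complex.norm_le_abs_re_add_abs_im _).trans ?_⟩
  rw [Complex.sub_re, Complex.sub_im, show 4 * R / N = 2 * R / N + 2 * R / N by ring]
  exact add_le_add hre him

theorem natAbs_coeff_le_polyHeight (P : ℤ[X]) (k : ℕ) : (P.coeff k).natAbs ≤ polyHeight P := by
  by_cases hk : k ∈ P.support
  · exact Finset.le_sup (f := fun k => (P.coeff k).natAbs) hk
  · simp [Polynomial.notMem_support_iff.1 hk]

theorem polyHeight_le {P : ℤ[X]} {B : ℕ} (h : ∀ k, (P.coeff k).natAbs ≤ B) : polyHeight P ≤ B :=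
  Finset.sup_le fun k _ => h k

theorem norm_aeval_le_of_natDegree_lt {P : ℤ[X]} {n : ℕ} (hP : P.natDegree < n) (ω : ℂ) :
    ‖aeval ω P‖ ≤ n * polyHeight P * max 1 ‖ω‖ ^ n := by
  rw [aeval_eq_sum_range' hP]
  calc ‖∑ i ∈ Finset.range n, P.coeff i • ω ^ i‖
      ≤ ∑ i ∈ Finset.range n, ‖P.coeff i • ω ^ i‖ := norm_sum_le _ _
    _ ≤ ∑ _i ∈ Finset.range n, (polyHeight P : ℝ) * max 1 ‖ω‖ ^ n := by
        refine Finset.sum_le_sum fun i hi => ?_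
        rw [zsmul_eq_mul, norm_mul, norm_pow, Complex.norm_intCast]
        have hcoeff : |(P.coeff i : ℝ)| ≤ polyHeight P := by
          rw [← Int.cast_abs, Int.abs_eq_natAbs]; exact_mod_cast natAbs_coeff_le_polyHeight P i
        have hpow : ‖ω‖ ^ i ≤ max 1 ‖ω‖ ^ n :=
          (pow_le_pow_left₀ (norm_nonneg ω) (le_max_right _ _) i).trans
            (pow_le_pow_right₀ (le_max_left _ _) (Finset.mem_range.1 hi).le)
        exact mul_le_mul hcoeff hpow (by positivity) (by positivity)
    _ = n * polyHeight P * max 1 ‖ω‖ ^ n := by simp [mul_assoc]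

theorem coeff_degreeLTEquiv_symm {R : Type*} [CommRing R] {n : ℕ} (f : Fin n → R) (k : ℕ) :
    ((degreeLTEquiv R n).symm f : R[X]).coeff k = if h : k < n then f ⟨k, h⟩ else 0 := by
  split_ifs with h
  · exact congrFun ((degreeLTEquiv R n).apply_symm_apply f) ⟨k, h⟩
  · exact coeff_eq_zero_of_degree_lt
      ((mem_degreeLT.1 ((degreeLTEquiv R n).symm f).2).trans_le (by exact_mod_cast not_lt.1 h))

theorem natDegree_lt_of_mem_degreeLT {R : Type*} [Semiring R] {n : ℕ} {p : R[X]} (hn : 0 < n)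
    (hp : p ∈ degreeLT R n) : p.natDegree < n := by
  rcases eq_or_ne p 0 with rfl | hp₀
  · simpa
  · exact (natDegree_lt_iff_degree_lt hp₀).2 (mem_degreeLT.1 hp)

theorem exists_ne_zero_norm_aeval_le (ω : ℂ) {m H : ℕ} (hm : 0 < m) (hH : 2 ≤ H) :
    ∃ Q : ℤ[X], Q ≠ 0 ∧ Q.natDegree < 2 * m ∧ polyHeight Q ≤ H ∧
      ‖aeval ω Q‖ ≤ 16 * m * H * max 1 ‖ω‖ ^ (2 * m) / (H : ℝ) ^ m := by
  set R : ℝ := 2 * m * H * max 1 ‖ω‖ ^ (2 * m)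
  have hR : 0 < R := by positivity
  have hHm : 2 ≤ H ^ m := hH.trans (Nat.le_self_pow hm.ne' H)
  let P : (Fin (2 * m) → Fin H) → degreeLT ℤ (2 * m) :=
    fun f => (degreeLTEquiv ℤ (2 * m)).symm fun k => (f k : ℤ)
  have coeff_P : ∀ f k, 0 ≤ (P f : ℤ[X]).coeff k ∧ (P f : ℤ[X]).coeff k < H := by
    intro f k
    simp only [P, coeff_degreeLTEquiv_symm]
    split_ifs with hk
    · exact ⟨Int.natCast_nonneg _, by exact_mod_cast (f ⟨k, hk⟩).isLt⟩
    · omega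
  have P_injective : Function.Injective P := fun f g hfg =>
    funext fun k => Fin.ext <| by
      exact_mod_cast congrFun ((degreeLTEquiv ℤ (2 * m)).symm.injective hfg) k
  have norm_P : ∀ f, ‖aeval ω (P f : ℤ[X])‖ ≤ R := fun f => by
    have hheight : polyHeight (P f : ℤ[X]) ≤ H :=
      polyHeight_le fun k => by have := coeff_P f k; omega
    refine (norm_aeval_le_of_natDegree_lt
      (natDegree_lt_of_mem_degreeLT (by omega) (P f).2) ω).trans ?_
    simp only [R]
    push_cast
    gcongr
  -- `H ^ m - 1` cells per axis: few enough for the pigeonhole, and still `H ^ m ≤ 2 (H ^ m - 1)`.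
  have hcard : (H ^ m - 1) ^ 2 < Fintype.card (Fin (2 * m) → Fin H) := by
    rw [Fintype.card_fun, Fintype.card_fin, Fintype.card_fin, pow_mul']
    exact Nat.pow_lt_pow_left (by omega) two_ne_zero
  obtain ⟨f₁, f₂, hne, hclose⟩ := Complex.exists_ne_norm_sub_le_of_card_lt
    (fun f => aeval ω (P f : ℤ[X])) (by omega) hcard hR norm_P
  set Q : ℤ[X] := ((P f₁ - P f₂ : degreeLT ℤ (2 * m)) : ℤ[X])
  have hQ : Q ≠ 0 := by
    simpa [Q, sub_eq_zero] using P_injective.ne hne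
  refine ⟨Q, hQ, natDegree_lt_of_mem_degreeLT (by omega) (P f₁ - P f₂).2,
    polyHeight_le fun k => ?_, ?_⟩
  · have h₁ := coeff_P f₁ k
    have h₂ := coeff_P f₂ k
    simp only [Q, Submodule.coe_sub, coeff_sub]
    omega
  · simp only [Q, Submodule.coe_sub, map_sub]
    refine hclose.trans ?_
    rw [div_le_div_iff₀ (by exact_mod_cast (by omega : 0 < H ^ m - 1)) (by positivity)]
    have hHm' : (H : ℝ) ^ m ≤ 2 * ((H ^ m - 1 : ℕ) : ℝ) := by
      have : (2 : ℝ) ≤ (H : ℝ) ^ m := by exact_mod_cast hHm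
      rw [Nat.cast_sub (by omega)]
      push_cast
      linarith
    simp only [R]
    nlinarith

theorem IsTranscendenceType.exists_sq_le {ω : ℂ} {τ : ℝ} (hω : Transcendental ℚ ω)
    (h : IsTranscendenceType ω τ) :
    ∃ K C : ℝ, ∀ m : ℕ, 0 < m → Real.log 2 * (m : ℝ) ^ 2 ≤ K * (m : ℝ) ^ τ + C * m := by
  obtain ⟨c, -, hmeas⟩ := h
  set L := Real.log (max 1 ‖ω‖)
  refine ⟨c * (2 + Real.log 2) ^ τ, 16 + Real.log 2 + 2 * L, fun m hm => ?_⟩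
  -- With height `2 ^ m` and degree `< 2m`, the measure's argument `n + log h` is `(2 + log 2) m`.
  obtain ⟨Q, hQ, hdeg, hheight, hnorm⟩ :=
    exists_ne_zero_norm_aeval_le ω hm (Nat.le_self_pow hm.ne' 2)
  have hpos : 0 < ‖aeval ω Q‖ := norm_pos_iff.2 fun h₀ =>
    hω.restrictScalars (algebraMap ℤ ℚ).injective_int ⟨Q, hQ, h₀⟩
  have lower := hmeas (2 * m) (2 ^ m : ℕ) Q hQ hdeg.le (by exact_mod_cast hheight)
  have upper := Real.log_le_log hpos hnorm
  have hm' : (0 : ℝ) < m := by exact_mod_cast hm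
  have hM : (0 : ℝ) < max 1 ‖ω‖ := lt_max_of_lt_left one_pos
  have hlog_lower : (((2 * m : ℕ) : ℝ) + Real.log ((2 ^ m : ℕ) : ℝ)) ^ τ =
      (2 + Real.log 2) ^ τ * (m : ℝ) ^ τ := by
    rw [← Real.mul_rpow (by positivity) hm'.le]
    push_cast
    rw [Real.log_pow]
    ring_nf
  have hlog_upper :
      Real.log (16 * m * ((2 ^ m : ℕ) : ℝ) * max 1 ‖ω‖ ^ (2 * m) / ((2 ^ m : ℕ) : ℝ) ^ m) =
      Real.log (16 * m) + m * Real.log 2 + 2 * m * L - m ^ 2 * Real.log 2 := by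
    push_cast
    rw [Real.log_div (by positivity) (by positivity), Real.log_mul (by positivity) (by positivity),
      Real.log_mul (by positivity) (by positivity), Real.log_pow, Real.log_pow, Real.log_pow,
      Real.log_pow]
    push_cast
    ring
  have hlog_16m : Real.log (16 * m) ≤ 16 * m :=
    (Real.log_le_sub_one_of_pos (by positivity)).trans (by linarith)
  rw [hlog_lower] at lower
  rw [hlog_upper] at upper
  linarith

theorem two_le_of_eventually_sq_le {a K C τ : ℝ} (ha : 0 < a)
    (h : ∀ᶠ m : ℕ in atTop, a * (m : ℝ) ^ 2 ≤ K * (m : ℝ) ^ τ + C * m) : 2 ≤ τ := by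
  by_contra! hτ
  have hlim : Tendsto (fun x : ℝ => K * x ^ (τ - 2) + C * x⁻¹) atTop (𝓝 0) := by
    have := ((tendsto_rpow_neg_atTop (sub_pos.2 hτ)).const_mul K).add
      (tendsto_inv_atTop_zero.const_mul C)
    simpa using this
  refine ha.not_ge (ge_of_tendsto (hlim.comp tendsto_natCast_atTop_atTop) ?_)
  filter_upwards [h, eventually_gt_atTop 0] with m hm hm₀
  have hm' : (0 : ℝ) < m := by exact_mod_cast hm₀
  have hsplit :
      (K * (m : ℝ) ^ (τ - 2) + C * (m : ℝ)⁻¹) * (m : ℝ) ^ 2 = K * (m : ℝ) ^ τ + C * m := by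
    rw [Real.rpow_sub hm', Real.rpow_two]
    field_simp
  rw [Function.comp_apply, ← mul_le_mul_iff_left₀ (by positivity : (0 : ℝ) < (m : ℝ) ^ 2), hsplit]
  exact hm

theorem transcendence_type_ge_two_general (ω : ℂ) (hω : Transcendental ℚ ω)
    (τ : ℝ) (h : IsTranscendenceType ω τ) : 2 ≤ τ := by
  obtain ⟨K, C, hKC⟩ := h.exists_sq_le hω
  exact two_le_of_eventually_sq_le (Real.log_pos one_lt_two) ((eventually_gt_atTop 0).mono hKC)

/-- Any transcendence type of a transcendental number is at least `2`. -/
theorem transcendence_type_ge_two (ω : ℂ) (hω : Transcendental ℚ ω)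
    (τ : ℝ) (hτ : 0 < τ) (h : IsTranscendenceType ω τ) : 2 ≤ τ :=
  transcendence_type_ge_two_general ω hω τ h
end

section
/- For every rational number a with 0 < a < 1 and a ≠ 1/2, there exists a nonzero algebraic number α such that B(a,a)·B(1−a,1−a) = α·π. -/
open Complex Polynomial

private lemma alg_add {x y : ℂ} (hx : IsAlgebraic ℚ x) (hy : IsAlgebraic ℚ y) :
    IsAlgebraic ℚ (x + y) := by
  rw [isAlgebraic_iff_isIntegral] at *
  exact hx.add hy

private lemma alg_mul {x y : ℂ} (hx : IsAlgebraic ℚ x) (hy : IsAlgebraic ℚ y) :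
    IsAlgebraic ℚ (x * y) := by
  rw [isAlgebraic_iff_isIntegral] at *
  exact hx.mul hy

private lemma alg_sub {x y : ℂ} (hx : IsAlgebraic ℚ x) (hy : IsAlgebraic ℚ y) :
    IsAlgebraic ℚ (x - y) := by
  rw [isAlgebraic_iff_isIntegral] at *
  exact hx.sub hy

private lemma alg_div {x y : ℂ} (hx : IsAlgebraic ℚ x) (hy : IsAlgebraic ℚ y) :
    IsAlgebraic ℚ (x / y) := by
  rw [div_eq_mul_inv]
  exact alg_mul hx hy.inv

private lemma alg_rat (q : ℚ) : IsAlgebraic ℚ ((q : ℂ)) := by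
  have := isAlgebraic_rat (A := ℂ) ℚ q
  simpa using this

private lemma alg_I : IsAlgebraic ℚ (I : ℂ) := by
  refine ⟨X ^ 2 + 1, ?_, ?_⟩
  · intro h
    have := congrArg (Polynomial.coeff · 0) h
    simp at this
  · simp [Complex.I_sq]

/-- The beta function `B(a,b) = Γ(a)Γ(b)/Γ(a+b)`. -/
noncomputable def cBeta (a b : ℂ) : ℂ :=
  Complex.Gamma a * Complex.Gamma b / Complex.Gamma (a + b)

/-- For every rational `a` with `0 < a < 1`, `a ≠ 1/2`, the number
`B(a,a)·B(1−a,1−a)` is a nonzero algebraic multiple of `π`. -/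
theorem beta_mul_beta_algebraic_multiple_pi (a : ℚ) (h0 : 0 < a) (h1 : a < 1)
    (h2 : a ≠ 1 / 2) :
    ∃ α : ℂ, α ≠ 0 ∧ IsAlgebraic ℚ α ∧
      cBeta (a : ℂ) (a : ℂ) * cBeta ((1 : ℂ) - (a : ℂ)) ((1 : ℂ) - (a : ℂ)) =
        α * (Real.pi : ℂ) := by
  set A : ℂ := (a : ℂ) with hA
  have hπ : (Real.pi : ℂ) ≠ 0 := by
    exact_mod_cast Real.pi_ne_zero
  set s : ℂ := Complex.sin (Real.pi * A) with hsdef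
  set c : ℂ := Complex.cos (Real.pi * A) with hcdef
  -- s ≠ 0
  have hs : s ≠ 0 := by
    rw [hsdef, Complex.sin_ne_zero_iff]
    intro k hk
    have hkc : (a : ℂ) = (k : ℂ) := mul_left_cancel₀ hπ (hk.trans (mul_comm _ _))
    have ha : a = (k : ℚ) := by exact_mod_cast hkc
    rw [ha] at h0 h1
    have : (0 : ℤ) < k := by exact_mod_cast h0
    have : (k : ℤ) < 1 := by exact_mod_cast h1
    omega
  -- c ≠ 0
  have hc : c ≠ 0 := by
    rw [hcdef, Complex.cos_ne_zero_iff]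
    intro k hk
    have hA2 : (a : ℂ) = (2 * (k : ℂ) + 1) / 2 := by
      apply mul_left_cancel₀ hπ
      rw [show (Real.pi : ℂ) * ((2 * (k : ℂ) + 1) / 2) = (2 * (k : ℂ) + 1) * Real.pi / 2 by ring]
      exact hk
    have ha : a = (2 * (k : ℚ) + 1) / 2 := by exact_mod_cast hA2
    rw [ha] at h0 h1
    have hk0 : (0 : ℤ) < 2 * k + 1 := by
      have : (0 : ℚ) < 2 * (k : ℚ) + 1 := by linarith [h0]
      exact_mod_cast this
    have hk1 : (2 * k + 1 : ℤ) < 2 := by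
      have : (2 * (k : ℚ) + 1) < 2 := by linarith [h1]
      exact_mod_cast this
    have : k = 0 := by omega
    rw [this] at ha
    apply h2
    rw [ha]; norm_num
  -- 1 - 2A ≠ 0
  have h12 : (1 : ℂ) - 2 * A ≠ 0 := by
    intro h
    apply h2
    have hc2 : (a : ℂ) = 1 / 2 := by
      have : (2 : ℂ) * (a : ℂ) = 1 := by linear_combination -h
      field_simp
      linear_combination this
    have h2a : (2 : ℂ) * (a : ℂ) = 1 := by linear_combination 2 * hc2
    have h2a' : (2 : ℚ) * a = 1 := by exact_mod_cast h2a
    linarith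
  -- Gamma identities
  have e1 : Complex.Gamma A * Complex.Gamma (1 - A) = (Real.pi : ℂ) / s :=
    Complex.Gamma_mul_Gamma_one_sub A
  have e2 : Complex.Gamma (2 * A) * Complex.Gamma (1 - 2 * A) =
      (Real.pi : ℂ) / (2 * s * c) := by
    rw [Complex.Gamma_mul_Gamma_one_sub (2 * A)]
    congr 1
    rw [show (Real.pi : ℂ) * (2 * A) = 2 * (Real.pi * A) by ring, Complex.sin_two_mul]
  have e3 : Complex.Gamma (2 - 2 * A) = (1 - 2 * A) * Complex.Gamma (1 - 2 * A) := by
    have := Complex.Gamma_add_one (1 - 2 * A) h12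
    rw [show (1 : ℂ) - 2 * A + 1 = 2 - 2 * A by ring] at this
    exact this
  refine ⟨2 * c / ((1 - 2 * A) * s), ?_, ?_, ?_⟩
  · apply div_ne_zero (by exact mul_ne_zero two_ne_zero hc)
    exact mul_ne_zero h12 hs
  · -- algebraicity
    obtain ⟨n, d, hd, hnd⟩ : ∃ (n : ℤ) (d : ℕ), d ≠ 0 ∧ (a : ℚ) = (n : ℚ) / d :=
      ⟨a.num, a.den, a.den_nz, (Rat.num_div_den a).symm⟩
    set ζ : ℂ := Complex.exp (Real.pi * A * I) with hζ
    have hzpow : ζ ^ (2 * d) = 1 := by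
      rw [hζ, ← Complex.exp_nat_mul]
      have hdc : (d : ℂ) ≠ 0 := Nat.cast_ne_zero.2 hd
      have hAd : A * (d : ℂ) = (n : ℂ) := by
        rw [hA, hnd]
        push_cast
        exact div_mul_cancel₀ _ hdc
      rw [show ((2 * d : ℕ) : ℂ) * (Real.pi * A * I) = (A * d) * (2 * Real.pi * I) by
        push_cast; ring, hAd]
      exact Complex.exp_int_mul_two_pi_mul_I n
    have hζalg : IsAlgebraic ℚ ζ := by
      refine ⟨X ^ (2 * d) - C 1, X_pow_sub_C_ne_zero (by omega) 1, ?_⟩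
      simp [hzpow]
    have hζinv : IsAlgebraic ℚ ζ⁻¹ := hζalg.inv
    have hcexp : c = (ζ + ζ⁻¹) / 2 := by
      rw [hcdef, Complex.cos,
        show -((Real.pi : ℂ) * A) * I = -((Real.pi : ℂ) * A * I) by ring,
        Complex.exp_neg, hζ]
    have hsexp : s = (ζ⁻¹ - ζ) * I / 2 := by
      rw [hsdef, Complex.sin,
        show -((Real.pi : ℂ) * A) * I = -((Real.pi : ℂ) * A * I) by ring,
        Complex.exp_neg, hζ]
    have hcalg : IsAlgebraic ℚ c := by
      rw [hcexp]
      exact alg_div (alg_add hζalg hζinv) (by exact_mod_cast alg_rat 2)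
    have hsalg : IsAlgebraic ℚ s := by
      rw [hsexp]
      exact alg_div (alg_mul (alg_sub hζinv hζalg) alg_I) (by exact_mod_cast alg_rat 2)
    have hAalg : IsAlgebraic ℚ A := alg_rat a
    exact alg_div (alg_mul (by exact_mod_cast alg_rat 2) hcalg)
      (alg_mul (alg_sub (by exact_mod_cast alg_rat 1) (alg_mul (by exact_mod_cast alg_rat 2) hAalg)) hsalg)
  · -- the identity
    have hsc : (2 : ℂ) * s * c ≠ 0 := by
      exact mul_ne_zero (mul_ne_zero two_ne_zero hs) hc
    have hne : Complex.Gamma (2 * A) * Complex.Gamma (1 - 2 * A) ≠ 0 := by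
      rw [e2]; exact div_ne_zero hπ hsc
    have hg3 := left_ne_zero_of_mul hne
    have hg4 := right_ne_zero_of_mul hne
    have key : cBeta A A * cBeta (1 - A) (1 - A) =
        (Complex.Gamma A * Complex.Gamma (1 - A)) ^ 2 /
          ((1 - 2 * A) * (Complex.Gamma (2 * A) * Complex.Gamma (1 - 2 * A))) := by
      rw [cBeta, cBeta, show A + A = 2 * A by ring,
        show (1 : ℂ) - A + (1 - A) = 2 - 2 * A by ring, e3]
      field_simp
    rw [key, e1, e2]
    field_simp
end

section
/- Let q ≥ 1, let ω_1,…,ω_q ∈ ℂ be algebraically independent over ℚ, and let χ ∈ ℂ be integral over the subring ℤ[ω_1,…,ω_q] of ℂ, of degree d over its fraction field. Then there exists a constant c > 0, depending only on ω_1,…,ω_q and χ, such that for every nonzero polynomial P ∈ ℤ[X_1,…,X_q,Y] there exist polynomials Q, Q_1,…,Q_d ∈ ℤ[X_1,…,X_q] with Q(ω_1,…,ω_q) ≠ 0, satisfying Q(ω_1,…,ω_q)·P(ω_1,…,ω_q,χ) = Σ_{i=1}^{d} Q_i(ω_1,…,ω_q)·χ^{i−1}, and such that the types of Q, Q_1,…,Q_d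 are all at most c·t(P) + c·log(2 + deg P). -/
/-!
Clearing the denominators of the minimal polynomial of `χ` over `ℚ(ω)` gives a relation
`D(ω) χ^d = ∑_{j<d} c_j(ω) χ^j` with `D, c_j ∈ ℤ[X]` and `D(ω) ≠ 0`. Iterating it writes
`(D(ω) χ)^b = ∑_{j<d} A_{b,j}(ω) χ^j`, where the degrees of the `A_{b,j}` grow linearly in `b`
and their lengths (sums of the absolute values of the coefficients) at most geometrically.
Multiplying `P(ω, χ)` by `Q = D^{deg P}` and reducing each monomial of `P` in this way yields
`Q_i` of degree `O(deg P)` and length at most `L(P) K^{deg P}` for a constant `K`. Since the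
length is submultiplicative and `L(P) ≤ (deg P + 1)^{q+1} H(P)`, taking logarithms gives the
bound on types.
-/

/-- The height of a multivariate integer polynomial: the maximum absolute value
of its coefficients. -/
noncomputable def mvHeight {σ : Type*} (P : MvPolynomial σ ℤ) : ℕ :=
  P.support.sup fun m => (P.coeff m).natAbs

/-- The type of a multivariate integer polynomial: the maximum of its total
degree and the logarithm of its height. -/
noncomputable def mvType {σ : Type*} (P : MvPolynomial σ ℤ) : ℝ :=
  max (P.totalDegree : ℝ) (Real.log (mvHeight P))

open MvPolynomial Finset

noncomputable def mvLength {σ : Type*} (P : MvPolynomial σ ℤ) : ℕ :=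
  ∑ m ∈ P.support, (P.coeff m).natAbs

section Length

variable {σ : Type*}

theorem natAbs_coeff_le_mvHeight (P : MvPolynomial σ ℤ) (m : σ →₀ ℕ) :
    (P.coeff m).natAbs ≤ mvHeight P := by
  by_cases h : P.coeff m = 0
  · simp [h]
  · exact le_sup (f := fun m => (P.coeff m).natAbs) (mem_support_iff.2 h)

theorem one_le_mvHeight {P : MvPolynomial σ ℤ} (hP : P ≠ 0) : 1 ≤ mvHeight P := by
  obtain ⟨m, hm⟩ := ne_zero_iff.1 hP
  exact (Int.natAbs_pos.2 hm).trans_le (natAbs_coeff_le_mvHeight P m)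

theorem mvHeight_le_mvLength (P : MvPolynomial σ ℤ) : mvHeight P ≤ mvLength P :=
  Finset.sup_le fun _ hm => single_le_sum (f := fun m => (P.coeff m).natAbs)
    (fun _ _ => Nat.zero_le _) hm

theorem one_le_mvLength {P : MvPolynomial σ ℤ} (hP : P ≠ 0) : 1 ≤ mvLength P :=
  (one_le_mvHeight hP).trans (mvHeight_le_mvLength P)

theorem mvLength_le_card_mul_mvHeight (P : MvPolynomial σ ℤ) :
    mvLength P ≤ #P.support * mvHeight P :=
  sum_le_card_nsmul _ _ _ fun m _ => natAbs_coeff_le_mvHeight P m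

theorem mvLength_eq_sum_of_support_subset {P : MvPolynomial σ ℤ} {s : Finset (σ →₀ ℕ)}
    (h : P.support ⊆ s) : mvLength P = ∑ m ∈ s, (P.coeff m).natAbs :=
  sum_subset h fun m _ hm => by simp [notMem_support_iff.1 hm]

theorem mvLength_add_le (P Q : MvPolynomial σ ℤ) :
    mvLength (P + Q) ≤ mvLength P + mvLength Q := by
  classical
  rw [mvLength_eq_sum_of_support_subset (support_add (p := P) (q := Q)),
    mvLength_eq_sum_of_support_subset (subset_union_left (s₂ := Q.support)),
    mvLength_eq_sum_of_support_subset (subset_union_right (s₁ := P.support)), ← sum_add_distrib]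
  exact sum_le_sum fun m _ => by simpa only [coeff_add] using Int.natAbs_add_le _ _

theorem mvLength_sum_le {ι : Type*} (s : Finset ι) (P : ι → MvPolynomial σ ℤ) :
    mvLength (∑ i ∈ s, P i) ≤ ∑ i ∈ s, mvLength (P i) :=
  le_sum_of_subadditive mvLength (by simp [mvLength]) mvLength_add_le s P

theorem mvLength_monomial_mul (a : σ →₀ ℕ) (c : ℤ) (P : MvPolynomial σ ℤ) :
    mvLength (monomial a c * P) = c.natAbs * mvLength P := by
  have h : (monomial a c * P).support ⊆ P.support.map (addLeftEmbedding a) := by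
    intro m hm
    rw [mem_support_iff, coeff_monomial_mul'] at hm
    split_ifs at hm with ham
    · refine mem_map.2 ⟨m - a, mem_support_iff.2 (right_ne_zero_of_mul hm), ?_⟩
      exact add_tsub_cancel_of_le ham
    · exact absurd rfl hm
  rw [mvLength_eq_sum_of_support_subset h, sum_map, mvLength, mul_sum]
  simp [Int.natAbs_mul]

theorem mvLength_mul_le (P Q : MvPolynomial σ ℤ) :
    mvLength (P * Q) ≤ mvLength P * mvLength Q := by
  conv_lhs => rw [P.as_sum, sum_mul]
  refine (mvLength_sum_le _ _).trans_eq ?_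
  simp only [mvLength_monomial_mul]
  rw [mvLength, mvLength, sum_mul]

theorem mvLength_one : mvLength (1 : MvPolynomial σ ℤ) = 1 := by
  simp [mvLength]

theorem mvLength_pow_le (P : MvPolynomial σ ℤ) (n : ℕ) :
    mvLength (P ^ n) ≤ mvLength P ^ n := by
  induction n with
  | zero => simp [mvLength_one]
  | succ n ih =>
    rw [pow_succ, pow_succ]
    exact (mvLength_mul_le _ _).trans (Nat.mul_le_mul_right _ ih)

theorem apply_le_totalDegree_of_mem_support {R : Type*} [CommSemiring R]
    {P : MvPolynomial σ R} {m : σ →₀ ℕ} (hm : m ∈ P.support) (i : σ) : m i ≤ P.totalDegree :=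
  (monomial_le_degreeOf i hm).trans (degreeOf_le_totalDegree P i)

theorem card_support_le [Fintype σ] {R : Type*} [CommSemiring R] (P : MvPolynomial σ R) :
    #P.support ≤ (P.totalDegree + 1) ^ Fintype.card σ := by
  classical
  calc #P.support ≤ #(Fintype.piFinset fun _ : σ => range (P.totalDegree + 1)) := by
        refine card_le_card_of_injOn (fun m => ⇑m) (fun m hm => ?_) DFunLike.coe_injective.injOn
        refine mem_coe.2 (Fintype.mem_piFinset.2 fun i => mem_range.2 (Nat.lt_succ_of_le ?_))
        exact apply_le_totalDegree_of_mem_support hm i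
    _ = (P.totalDegree + 1) ^ Fintype.card σ := by simp

end Length

section PowerReduction

variable {R : Type*} [CommRing R]

/-- Multiplication by `D x` on coefficient sequences in the basis `1, x, …, x^{d-1}`, when
`D x^d = ∑_{j<d} c j * x^j`. -/
def reduceStep (d : ℕ) (D : R) (c A : ℕ → R) (j : ℕ) : R :=
  (if j = 0 then 0 else D * A (j - 1)) + A (d - 1) * c j

def reducedPow (d : ℕ) (D : R) (c : ℕ → R) (b : ℕ) : ℕ → R :=
  (reduceStep d D c)^[b] fun j => if j = 0 then 1 else 0

theorem reducedPow_succ (d : ℕ) (D : R) (c : ℕ → R) (b : ℕ) :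
    reducedPow d D c (b + 1) = reduceStep d D c (reducedPow d D c b) :=
  Function.iterate_succ_apply' _ _ _

variable {S F : Type*} [CommRing S] [FunLike F R S] [RingHomClass F R S] (f : F)
  {d : ℕ} {D : R} {c : ℕ → R} {x : S}

theorem sum_reduceStep_mul_pow (hd : 1 ≤ d)
    (hrel : f D * x ^ d = ∑ j ∈ range d, f (c j) * x ^ j) (A : ℕ → R) :
    ∑ j ∈ range d, f (reduceStep d D c A j) * x ^ j =
      f D * x * ∑ j ∈ range d, f (A j) * x ^ j := by
  obtain ⟨e, rfl⟩ := Nat.exists_eq_add_of_le' hd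
  have hshift : ∑ j ∈ range (e + 1), f (if j = 0 then 0 else D * A (j - 1)) * x ^ j =
      ∑ i ∈ range e, f D * f (A i) * x ^ (i + 1) := by
    simp [sum_range_succ']
  simp only [reduceStep, map_add, add_mul, sum_add_distrib, hshift]
  rw [sum_range_succ (fun j => f (A j) * x ^ j), mul_add, mul_sum, add_tsub_cancel_right]
  congr 1
  · exact sum_congr rfl fun i _ => by ring
  · simp only [map_mul, mul_assoc, ← mul_sum, ← hrel]
    ring

theorem sum_reducedPow_mul_pow (hd : 1 ≤ d)
    (hrel : f D * x ^ d = ∑ j ∈ range d, f (c j) * x ^ j) (b : ℕ) :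
    (f D * x) ^ b = ∑ j ∈ range d, f (reducedPow d D c b j) * x ^ j := by
  induction b with
  | zero =>
    rw [sum_eq_single_of_mem 0 (mem_range.2 hd) fun j _ hj => by simp [reducedPow, hj]]
    simp [reducedPow]
  | succ b ih => rw [reducedPow_succ, sum_reduceStep_mul_pow f hd hrel, ← ih, pow_succ']

end PowerReduction

section ReducedPowBounds

variable {σ R : Type*} [CommRing R] {d : ℕ}

theorem totalDegree_reduceStep_le {D : MvPolynomial σ R} {c : ℕ → MvPolynomial σ R} {k δ : ℕ}
    (hD : D.totalDegree ≤ k) (hc : ∀ j < d, (c j).totalDegree ≤ k) {A : ℕ → MvPolynomial σ R}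
    (hA : ∀ j < d, (A j).totalDegree ≤ δ) (j : ℕ) (hj : j < d) :
    (reduceStep d D c A j).totalDegree ≤ k + δ := by
  refine (totalDegree_add _ _).trans (max_le ?_ ?_)
  · split_ifs
    · simp
    · exact (totalDegree_mul _ _).trans (Nat.add_le_add hD (hA _ (by omega)))
  · exact (totalDegree_mul _ _).trans
      ((Nat.add_le_add (hA _ (by omega)) (hc j hj)).trans_eq (add_comm _ _))

theorem mvLength_reduceStep_le {D : MvPolynomial σ ℤ} {c : ℕ → MvPolynomial σ ℤ} {K B : ℕ}
    (hK : ∀ j < d, mvLength D + mvLength (c j) ≤ K)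
    {A : ℕ → MvPolynomial σ ℤ} (hA : ∀ j < d, mvLength (A j) ≤ B) (j : ℕ) (hj : j < d) :
    mvLength (reduceStep d D c A j) ≤ K * B := by
  have hshift : mvLength (if j = 0 then 0 else D * A (j - 1)) ≤ mvLength D * B := by
    split_ifs
    · simp [mvLength]
    · exact (mvLength_mul_le _ _).trans (Nat.mul_le_mul_left _ (hA _ (by omega)))
  calc mvLength (reduceStep d D c A j)
      ≤ mvLength D * B + B * mvLength (c j) :=
        (mvLength_add_le _ _).trans <| Nat.add_le_add hshift <|
          (mvLength_mul_le _ _).trans (Nat.mul_le_mul_right _ (hA _ (by omega)))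
    _ = (mvLength D + mvLength (c j)) * B := by ring
    _ ≤ K * B := Nat.mul_le_mul_right _ (hK j hj)

theorem totalDegree_reducedPow_le {D : MvPolynomial σ R} {c : ℕ → MvPolynomial σ R} {k : ℕ}
    (hD : D.totalDegree ≤ k) (hc : ∀ j < d, (c j).totalDegree ≤ k) (b : ℕ) :
    ∀ j < d, (reducedPow d D c b j).totalDegree ≤ k * b := by
  induction b with
  | zero => intro j _; by_cases hj : j = 0 <;> simp [reducedPow, hj]
  | succ b ih =>
    rw [reducedPow_succ, mul_add_one, add_comm]
    exact totalDegree_reduceStep_le hD hc ih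

theorem mvLength_reducedPow_le {D : MvPolynomial σ ℤ} {c : ℕ → MvPolynomial σ ℤ} {K : ℕ}
    (hK : ∀ j < d, mvLength D + mvLength (c j) ≤ K) (b : ℕ) :
    ∀ j < d, mvLength (reducedPow d D c b j) ≤ K ^ b := by
  induction b with
  | zero => intro j _; by_cases hj : j = 0 <;> simp [reducedPow, hj, mvLength]
  | succ b ih =>
    rw [reducedPow_succ, pow_succ']
    exact mvLength_reduceStep_le hK ih

end ReducedPowBounds

section IntegralRelation

variable {σ L : Type*} [Field L] [Algebra ℚ L]

def ratioField (ω : σ → L) : IntermediateField ℚ L where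
  carrier := {z | ∃ f g : MvPolynomial σ ℤ, aeval ω g ≠ 0 ∧ z * aeval ω g = aeval ω f}
  mul_mem' := by
    rintro a b ⟨f₁, g₁, hg₁, h₁⟩ ⟨f₂, g₂, hg₂, h₂⟩
    refine ⟨f₁ * f₂, g₁ * g₂, by simp [hg₁, hg₂], ?_⟩
    rw [map_mul, map_mul, mul_mul_mul_comm, h₁, h₂]
  add_mem' := by
    rintro a b ⟨f₁, g₁, hg₁, h₁⟩ ⟨f₂, g₂, hg₂, h₂⟩
    refine ⟨f₁ * g₂ + f₂ * g₁, g₁ * g₂, by simp [hg₁, hg₂], ?_⟩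
    simp only [map_add, map_mul]
    linear_combination aeval ω g₂ * h₁ + aeval ω g₁ * h₂
  algebraMap_mem' r := by
    have := algebraRat.charZero (R := L)
    refine ⟨C r.num, C (r.den : ℤ), by simp, ?_⟩
    simp [eq_ratCast, Rat.cast_def]
  inv_mem' := by
    rintro z ⟨f, g, hg, h⟩
    by_cases hz : z = 0
    · exact ⟨0, 1, by simp, by simp [hz]⟩
    · refine ⟨g, f, ?_, ?_⟩
      · rw [← h]; exact mul_ne_zero hz hg
      · rw [← h, inv_mul_cancel_left₀ hz]

theorem exists_aeval_mul_eq_of_mem_adjoin {ω : σ → L} {z : L}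
    (hz : z ∈ IntermediateField.adjoin ℚ (Set.range ω)) :
    ∃ f g : MvPolynomial σ ℤ, aeval ω g ≠ 0 ∧ z * aeval ω g = aeval ω f := by
  refine (IntermediateField.adjoin_le_iff.2 ?_ : _ ≤ ratioField ω) hz
  rintro _ ⟨i, rfl⟩
  exact ⟨X i, 1, by simp, by simp⟩

theorem isIntegral_adjoin_rat_of_isIntegral_adjoin_int {S : Set L} {x : L}
    (hx : IsIntegral (Algebra.adjoin ℤ S) x) : IsIntegral (IntermediateField.adjoin ℚ S) x := by
  have hle : Algebra.adjoin ℤ S ≤ (IntermediateField.adjoin ℚ S).toSubalgebra.restrictScalars ℤ :=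
    Algebra.adjoin_le (IntermediateField.subset_adjoin ℚ S)
  exact IsIntegral.map_of_comp_eq
    ((algebraMap (Algebra.adjoin ℤ S) L).codRestrict (IntermediateField.adjoin ℚ S)
      fun r => hle r.2)
    (RingHom.id L) rfl hx

theorem exists_aeval_mul_pow_natDegree_minpoly_eq {ω : σ → L} {x : L}
    (hx : IsIntegral (IntermediateField.adjoin ℚ (Set.range ω)) x) :
    ∃ (D : MvPolynomial σ ℤ) (c : ℕ → MvPolynomial σ ℤ), aeval ω D ≠ 0 ∧
      aeval ω D * x ^ (minpoly (IntermediateField.adjoin ℚ (Set.range ω)) x).natDegree =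
        ∑ j ∈ range (minpoly (IntermediateField.adjoin ℚ (Set.range ω)) x).natDegree,
          aeval ω (c j) * x ^ j := by
  set μ := minpoly (IntermediateField.adjoin ℚ (Set.range ω)) x
  set d := μ.natDegree
  have hμ : x ^ d = -∑ j ∈ range d, (μ.coeff j : L) * x ^ j := by
    have h := minpoly.aeval (IntermediateField.adjoin ℚ (Set.range ω)) x
    rw [(minpoly.monic hx).as_sum] at h
    simp only [map_add, map_pow, Polynomial.aeval_X, map_sum, map_mul, Polynomial.aeval_C] at h
    exact eq_neg_of_add_eq_zero_left h
  choose F G hG hFG using fun j => exists_aeval_mul_eq_of_mem_adjoin (μ.coeff j).2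
  refine ⟨∏ j ∈ range d, G j, fun j => -(F j * ∏ k ∈ (range d).erase j, G k), ?_, ?_⟩
  · rw [map_prod]
    exact prod_ne_zero_iff.2 fun j _ => hG j
  · rw [hμ, mul_neg, mul_sum, ← sum_neg_distrib]
    refine sum_congr rfl fun j hj => ?_
    rw [map_neg, map_mul, map_prod, map_prod, ← mul_prod_erase _ _ hj, ← hFG j]
    ring

end IntegralRelation

section LastVariable

variable {n : ℕ}

noncomputable def Finsupp.init {M : Type*} [Zero M] (m : Fin (n + 1) →₀ M) : Fin n →₀ M :=
  m.comapDomain Fin.castSucc (Fin.castSucc_injective n).injOn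

@[simp]
theorem Finsupp.init_apply {M : Type*} [Zero M] (m : Fin (n + 1) →₀ M) (i : Fin n) :
    m.init i = m i.castSucc :=
  rfl

theorem Finsupp.sum_init_add (m : Fin (n + 1) →₀ ℕ) :
    (m.init.sum fun _ e => e) + m (Fin.last n) = m.sum fun _ e => e := by
  simp [Finsupp.sum_fintype, Fin.sum_univ_castSucc]

variable {R : Type*} [CommRing R] {d : ℕ}

theorem aeval_snoc_monomial {A : Type*} [CommRing A] [Algebra R A] (ω : Fin n → A) (x : A)
    (m : Fin (n + 1) →₀ ℕ) (r : R) :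
    aeval (Fin.snoc ω x) (monomial m r) = aeval ω (monomial m.init r) * x ^ m (Fin.last n) := by
  simp [aeval_monomial, Finsupp.prod_fintype, Fin.prod_univ_castSucc, mul_assoc]

/-- The monomial `r X^a Y^b` of `P` contributes the `j`-th coefficient of
`r X^a D^{deg P - b} (D Y)^b` in the basis `1, Y, …, Y^{d-1}`. -/
noncomputable def reduceLastVar (d : ℕ) (D : MvPolynomial (Fin n) R)
    (c : ℕ → MvPolynomial (Fin n) R) (P : MvPolynomial (Fin (n + 1)) R) (j : ℕ) :
    MvPolynomial (Fin n) R :=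
  ∑ m ∈ P.support, monomial m.init (P.coeff m) * D ^ (P.totalDegree - m (Fin.last n)) *
    reducedPow d D c (m (Fin.last n)) j

theorem aeval_pow_totalDegree_mul_aeval_snoc {A : Type*} [CommRing A] [Algebra R A]
    {ω : Fin n → A} {x : A} {D : MvPolynomial (Fin n) R} {c : ℕ → MvPolynomial (Fin n) R}
    (hd : 1 ≤ d) (hrel : aeval ω D * x ^ d = ∑ j ∈ range d, aeval ω (c j) * x ^ j)
    (P : MvPolynomial (Fin (n + 1)) R) :
    aeval ω D ^ P.totalDegree * aeval (Fin.snoc ω x) P =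
      ∑ j ∈ range d, aeval ω (reduceLastVar d D c P j) * x ^ j := by
  simp only [reduceLastVar, map_sum, sum_mul]
  rw [sum_comm]
  rw [show aeval (Fin.snoc ω x) P = ∑ m ∈ P.support, aeval (Fin.snoc ω x) (monomial m (P.coeff m))
    by rw [← map_sum, ← as_sum], mul_sum]
  refine sum_congr rfl fun m hm => ?_
  obtain ⟨k, hk⟩ :=
    Nat.exists_eq_add_of_le' (apply_le_totalDegree_of_mem_support hm (Fin.last n))
  rw [aeval_snoc_monomial, hk, Nat.add_sub_cancel]
  calc aeval ω D ^ (k + m (Fin.last n)) *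
        (aeval ω (monomial m.init (P.coeff m)) * x ^ m (Fin.last n))
      = aeval ω (monomial m.init (P.coeff m) * D ^ k) * (aeval ω D * x) ^ m (Fin.last n) := by
        rw [map_mul, map_pow]; ring
    _ = _ := by
        rw [sum_reducedPow_mul_pow (aeval ω) hd hrel, mul_sum]
        exact sum_congr rfl fun j _ => by rw [map_mul _ _ (reducedPow _ _ _ _ _)]; ring

theorem totalDegree_reduceLastVar_le {D : MvPolynomial (Fin n) R}
    {c : ℕ → MvPolynomial (Fin n) R} {k : ℕ} (hD : D.totalDegree ≤ k)
    (hc : ∀ j < d, (c j).totalDegree ≤ k) (P : MvPolynomial (Fin (n + 1)) R) {j : ℕ}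
    (hj : j < d) : (reduceLastVar d D c P j).totalDegree ≤ (k + 1) * P.totalDegree := by
  refine (totalDegree_finsetSum _ _).trans (Finset.sup_le fun m hm => ?_)
  obtain ⟨t, ht⟩ :=
    Nat.exists_eq_add_of_le' (apply_le_totalDegree_of_mem_support hm (Fin.last n))
  have hinit : (monomial m.init (P.coeff m)).totalDegree ≤ t :=
    (totalDegree_monomial_le _ _).trans <| le_tsub_of_add_le_right
      ((Finsupp.sum_init_add m).trans_le (le_totalDegree hm)) |>.trans_eq (by omega)
  have hpow : (D ^ t).totalDegree ≤ t * k := (totalDegree_pow _ _).trans (Nat.mul_le_mul_left _ hD)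
  have hA := totalDegree_reducedPow_le hD hc (m (Fin.last n)) j hj
  rw [ht, Nat.add_sub_cancel]
  refine (totalDegree_mul _ _).trans <| (Nat.add_le_add (totalDegree_mul _ _) hA).trans ?_
  nlinarith

theorem mvLength_reduceLastVar_le {D : MvPolynomial (Fin n) ℤ} {c : ℕ → MvPolynomial (Fin n) ℤ}
    {K : ℕ} (hd : 1 ≤ d) (hK : ∀ j < d, mvLength D + mvLength (c j) ≤ K)
    (P : MvPolynomial (Fin (n + 1)) ℤ) {j : ℕ} (hj : j < d) :
    mvLength (reduceLastVar d D c P j) ≤ mvLength P * K ^ P.totalDegree := by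
  have hDK : mvLength D ≤ K := (Nat.le_add_right _ _).trans (hK 0 hd)
  refine (mvLength_sum_le _ _).trans ?_
  rw [mvLength, sum_mul]
  refine sum_le_sum fun m hm => ?_
  obtain ⟨t, ht⟩ :=
    Nat.exists_eq_add_of_le' (apply_le_totalDegree_of_mem_support hm (Fin.last n))
  rw [ht, Nat.add_sub_cancel, pow_add, ← mul_assoc]
  refine (mvLength_mul_le _ _).trans (Nat.mul_le_mul ?_ (mvLength_reducedPow_le hK _ j hj))
  rw [mvLength_monomial_mul]
  exact Nat.mul_le_mul_left _ ((mvLength_pow_le _ _).trans (Nat.pow_le_pow_left hDK _))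

end LastVariable

theorem mvHeight_le_of_mvLength_le {σ τ : Type*} [Fintype τ] {P : MvPolynomial τ ℤ}
    {f : MvPolynomial σ ℤ} {B : ℕ} (hf : mvLength f ≤ mvLength P * B) :
    mvHeight f ≤ (P.totalDegree + 1) ^ Fintype.card τ * mvHeight P * B :=
  calc mvHeight f ≤ mvLength P * B := (mvHeight_le_mvLength f).trans hf
    _ ≤ #P.support * mvHeight P * B := by gcongr; exact mvLength_le_card_mul_mvHeight P
    _ ≤ (P.totalDegree + 1) ^ Fintype.card τ * mvHeight P * B := by gcongr; exact card_support_le P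

theorem mvType_le_of_mvLength_le {σ τ : Type*} [Fintype τ] {P : MvPolynomial τ ℤ}
    (hP : P ≠ 0) {f : MvPolynomial σ ℤ} {a K : ℕ} (hK : 1 ≤ K)
    (hdeg : f.totalDegree ≤ a * P.totalDegree)
    (hf : mvLength f ≤ mvLength P * K ^ P.totalDegree) :
    mvType f ≤ (a + Fintype.card τ + 1 + Real.log K) * mvType P +
      (a + Fintype.card τ + 1 + Real.log K) * Real.log (2 + P.totalDegree) := by
  set N := P.totalDegree
  set r := Fintype.card τ
  have hN : (N : ℝ) ≤ mvType P := le_max_left _ _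
  have hHP : Real.log (mvHeight P) ≤ mvType P := le_max_right _ _
  have hL : Real.log (N + 1) ≤ Real.log (2 + N) := Real.log_le_log (by positivity) (by linarith)
  have hL0 : 0 ≤ Real.log (2 + N) := Real.log_nonneg (by linarith [N.cast_nonneg (α := ℝ)])
  have hlogK : 0 ≤ Real.log K := Real.log_natCast_nonneg K
  have hHP1 : (1 : ℝ) ≤ mvHeight P := by exact_mod_cast one_le_mvHeight hP
  have hK1 : (1 : ℝ) ≤ K := by exact_mod_cast hK
  have hbound : (1 : ℝ) ≤ ((N : ℝ) + 1) ^ r * mvHeight P * (K : ℝ) ^ N :=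
    one_le_mul_of_one_le_of_one_le
      (one_le_mul_of_one_le_of_one_le (one_le_pow₀ (by linarith)) hHP1) (one_le_pow₀ hK1)
  have hlog : Real.log (mvHeight f) ≤
      r * Real.log (N + 1) + Real.log (mvHeight P) + N * Real.log K := by
    rw [← Real.log_pow, ← Real.log_pow, ← Real.log_mul (by positivity) (by positivity),
      ← Real.log_mul (by positivity) (by positivity)]
    rcases (mvHeight f).eq_zero_or_pos with h | h
    · rw [h, Nat.cast_zero, Real.log_zero]
      exact Real.log_nonneg hbound
    · exact Real.log_le_log (by exact_mod_cast h) (by exact_mod_cast mvHeight_le_of_mvLength_le hf)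
  refine max_le ?_ (by nlinarith)
  have : (f.totalDegree : ℝ) ≤ a * N := by exact_mod_cast hdeg
  nlinarith

theorem type_of_element_bound_general (q : ℕ) (ω : Fin q → ℂ) (χ : ℂ)
    (hχ : IsIntegral (Algebra.adjoin ℤ (Set.range ω)) χ) (d : ℕ)
    (hd : d = (minpoly (IntermediateField.adjoin ℚ (Set.range ω)) χ).natDegree) :
    ∃ c > (0 : ℝ), ∀ P : MvPolynomial (Fin (q + 1)) ℤ, P ≠ 0 →
      ∃ (Q : MvPolynomial (Fin q) ℤ) (Qi : Fin d → MvPolynomial (Fin q) ℤ),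
        MvPolynomial.aeval ω Q ≠ 0 ∧
        MvPolynomial.aeval ω Q * MvPolynomial.aeval (Fin.snoc ω χ) P =
          ∑ i : Fin d, MvPolynomial.aeval ω (Qi i) * χ ^ (i : ℕ) ∧
        mvType Q ≤ c * mvType P + c * Real.log (2 + (P.totalDegree : ℝ)) ∧
        ∀ i, mvType (Qi i) ≤ c * mvType P + c * Real.log (2 + (P.totalDegree : ℝ)) := by
  have hχℚ := isIntegral_adjoin_rat_of_isIntegral_adjoin_int hχ
  have hd1 : 1 ≤ d := hd ▸ minpoly.natDegree_pos hχℚ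
  obtain ⟨D, c, hD, hrel⟩ := exists_aeval_mul_pow_natDegree_minpoly_eq hχℚ
  rw [← hd] at hrel
  set k := D.totalDegree + ∑ j ∈ range d, (c j).totalDegree
  set K := mvLength D + ∑ j ∈ range d, mvLength (c j)
  have hc : ∀ j < d, (c j).totalDegree ≤ k := fun j hj =>
    le_add_left (single_le_sum (f := fun j => (c j).totalDegree) (by simp) (mem_range.2 hj))
  have hK : ∀ j < d, mvLength D + mvLength (c j) ≤ K := fun j hj =>
    Nat.add_le_add_left (single_le_sum (f := fun j => mvLength (c j)) (by simp) (mem_range.2 hj)) _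
  have hK1 : 1 ≤ K := (one_le_mvLength fun h => hD (by simp [h])).trans (Nat.le_add_right _ _)
  refine ⟨(k + 1 : ℕ) + Fintype.card (Fin (q + 1)) + 1 + Real.log K, by positivity, fun P hP =>
    ⟨D ^ P.totalDegree, fun i => reduceLastVar d D c P i, by simpa using pow_ne_zero _ hD,
      ?_, ?_, fun i => mvType_le_of_mvLength_le hP hK1
        (totalDegree_reduceLastVar_le (Nat.le_add_right _ _) hc P i.2)
        (mvLength_reduceLastVar_le hd1 hK P i.2)⟩⟩
  · rw [map_pow, aeval_pow_totalDegree_mul_aeval_snoc hd1 hrel,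
      Fin.sum_univ_eq_sum_range (fun j => aeval ω (reduceLastVar d D c P j) * χ ^ j)]
  · refine mvType_le_of_mvLength_le hP hK1 ?_ ?_
    · rw [mul_comm]
      exact (totalDegree_pow _ _).trans (Nat.mul_le_mul_left _ (Nat.le_add_right_of_le le_self_add))
    · calc mvLength (D ^ P.totalDegree) ≤ K ^ P.totalDegree :=
            (mvLength_pow_le _ _).trans (Nat.pow_le_pow_left (Nat.le_add_right _ _) _)
        _ ≤ mvLength P * K ^ P.totalDegree :=
            Nat.le_mul_of_pos_left _ (one_le_mvLength hP)

/-- Let `ω_1,…,ω_q ∈ ℂ` be algebraically independent and `χ` integral over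
`ℤ[ω_1,…,ω_q]` of degree `d` over the fraction field `ℚ(ω_1,…,ω_q)`. There is a
constant `c > 0` such that every nonzero `P ∈ ℤ[X_1,…,X_q,Y]` admits a
representation `Q(ω)·P(ω,χ) = Σ_{i=1}^{d} Q_i(ω)·χ^{i−1}` with `Q(ω) ≠ 0` and
all the types of `Q, Q_1,…,Q_d` at most `c·t(P) + c·log(2 + deg P)`. -/
theorem type_of_element_bound (q : ℕ) (hq : 1 ≤ q) (ω : Fin q → ℂ)
    (hω : AlgebraicIndependent ℚ ω) (χ : ℂ)
    (hχ : IsIntegral (Algebra.adjoin ℤ (Set.range ω)) χ) (d : ℕ)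
    (hd : d = (minpoly (IntermediateField.adjoin ℚ (Set.range ω)) χ).natDegree) :
    ∃ c > (0 : ℝ), ∀ P : MvPolynomial (Fin (q + 1)) ℤ, P ≠ 0 →
      ∃ (Q : MvPolynomial (Fin q) ℤ) (Qi : Fin d → MvPolynomial (Fin q) ℤ),
        MvPolynomial.aeval ω Q ≠ 0 ∧
        MvPolynomial.aeval ω Q * MvPolynomial.aeval (Fin.snoc ω χ) P =
          ∑ i : Fin d, MvPolynomial.aeval ω (Qi i) * χ ^ (i : ℕ) ∧
        mvType Q ≤ c * mvType P + c * Real.log (2 + (P.totalDegree : ℝ)) ∧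
        ∀ i, mvType (Qi i) ≤ c * mvType P + c * Real.log (2 + (P.totalDegree : ℝ)) :=
  type_of_element_bound_general q ω χ hχ d hd
end
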